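/- arXiv:1705.00059 — 8 statements merged into one kernel-verified Lean document; each statement's English description precedes it below -/
import Mathlib

section
/- Let f assign to each point (s,x) ∈ ℝ² a function f(s,x;·) : [s,∞) → ℝ which is continuous with f(s,x;s) = x, and suppose f satisfies the flow property (F1): f(s, f(r,x;s); t) = f(r,x;t) for all r ≤ s ≤ t and all x ∈ ℝ. Then f is monotone in the starting point: for all s ≤ t and all x, y ∈ ℝ, if x ≤ y then f(s,x;t) ≤ f(s,y;t). -/
/-- A family `f` of continuous trajectories `f s x : [s,∞) → ℝ` with
`f s x s = x` satisfying the flow property (F1) is monotone in the starting point. -/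
theorem flow_monotone_in_start (f : ℝ → ℝ → ℝ → ℝ)
    (hcont : ∀ s x, ContinuousOn (fun t => f s x t) (Set.Ici s))
    (hinit : ∀ s x, f s x s = x)
    (hF1 : ∀ r s t x, r ≤ s → s ≤ t → f s (f r x s) t = f r x t) :
    ∀ s t x y : ℝ, s ≤ t → x ≤ y → f s x t ≤ f s y t := by
  intro s t x y hst hxy
  by_contra h
  push_neg at h
  -- g u = f s x u - f s y u is continuous on [s,t], ≤ 0 at s, > 0 at t
  have hg : ContinuousOn (fun u => f s x u - f s y u) (Set.Icc s t) :=
    ((hcont s x).sub (hcont s y)).mono (Set.Icc_subset_Ici_self)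
  have hmem : (0:ℝ) ∈ Set.Icc (f s x s - f s y s) (f s x t - f s y t) := by
    constructor
    · rw [hinit, hinit]; linarith
    · linarith
  obtain ⟨u, hu, hgu⟩ := intermediate_value_Icc hst hg hmem
  have heq : f s x u = f s y u := by dsimp at hgu; linarith
  have h1 := hF1 s u t x hu.1 hu.2
  have h2 := hF1 s u t y hu.1 hu.2
  rw [heq] at h1
  rw [h2] at h1
  linarith
end

section
/- For every f in the space of flows 𝔽 and all s ≤ t and x, c ∈ ℝ, the following equivalence holds: f(s,x;t) < c if and only if there exists a rational pair (p,u) ∈ ℚ² with p < s such that f(p,u;s) ≥ x and f(p,u;t) < c. -/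
/-- The range of the flow `f` at time `s`: all values `f r x s` with `r < s`. -/
def rangeAt (f : ℝ → ℝ → ℝ → ℝ) (s : ℝ) : Set ℝ :=
  {y | ∃ r x : ℝ, r < s ∧ f r x s = y}

/-- `f` belongs to the space of flows 𝔽: each trajectory `t ↦ f s x t` is continuous on
`[s,∞)` with `f s x s = x`, and conditions F1–F4 hold. -/
def IsFlow (f : ℝ → ℝ → ℝ → ℝ) : Prop :=
  (∀ s x : ℝ, f s x s = x) ∧
  (∀ s x : ℝ, ContinuousOn (fun t => f s x t) (Set.Ici s)) ∧
  -- F1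
  (∀ r s t x : ℝ, r ≤ s → s ≤ t → f s (f r x s) t = f r x t) ∧
  -- F2
  (∀ s : ℝ, Dense (rangeAt f s)) ∧
  -- F3
  (∀ s t : ℝ, s ≤ t → ∀ x ∉ rangeAt f s,
    ContinuousWithinAt (fun y => f s y t) (Set.Ici x) x) ∧
  -- F4
  (∀ s t x : ℝ, s < t → ∃ r y : ℝ, r < t ∧ y ∉ rangeAt f r ∧ f s x t = f r y t)

/-!
Trajectories of a flow cannot cross: if two of them met at some time they would coincide
afterwards by F1, so by the intermediate value theorem an order between them at one time
persists. Hence `f(s,x;t) < c` as soon as some trajectory starting before `s` passes above `x`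
at time `s` and below `c` at time `t`. Conversely, given `f(s,x;t) < c`, right-continuity (F3)
at a point off the range, reached through F4 when `x` is in the range, and density (F2) when
it is not, yield two trajectories from a common time `ρ < s` with starting values `w < w'`,
the lower above `x` at time `s`, the upper below `c` at time `t`. Shortly after `ρ` they are
still strictly apart, so a rational time `p` and a rational value `u` between them can be
chosen there, and the trajectory through `(p, u)`, squeezed between them, is the witness.
-/

open Set Filter Topology

namespace IsFlow

variable {f : ℝ → ℝ → ℝ → ℝ}

theorem apply_self (hf : IsFlow f) (s x : ℝ) : f s x s = x := hf.1 s x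

theorem continuousOn_Ici (hf : IsFlow f) (s x : ℝ) : ContinuousOn (fun t => f s x t) (Ici s) :=
  hf.2.1 s x

theorem apply_apply (hf : IsFlow f) {r s t x : ℝ} (hrs : r ≤ s) (hst : s ≤ t) :
    f s (f r x s) t = f r x t :=
  hf.2.2.1 r s t x hrs hst

theorem dense_rangeAt (hf : IsFlow f) (s : ℝ) : Dense (rangeAt f s) := hf.2.2.2.1 s

theorem continuousWithinAt_Ici (hf : IsFlow f) {s t x : ℝ} (hst : s ≤ t)
    (hx : x ∉ rangeAt f s) : ContinuousWithinAt (fun y => f s y t) (Ici x) x :=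
  hf.2.2.2.2.1 s t hst x hx

theorem exists_notMem_rangeAt (hf : IsFlow f) {s t : ℝ} (x : ℝ) (hst : s < t) :
    ∃ r y : ℝ, r < t ∧ y ∉ rangeAt f r ∧ f s x t = f r y t :=
  hf.2.2.2.2.2 s t x hst

theorem no_crossing (hf : IsFlow f) {r r' σ τ x x' : ℝ} (hrσ : r ≤ σ) (hr'σ : r' ≤ σ)
    (hστ : σ ≤ τ) (h : f r x σ ≤ f r' x' σ) : f r x τ ≤ f r' x' τ := by
  by_contra! hlt
  have hcont : ContinuousOn (fun u => f r x u - f r' x' u) (Icc σ τ) :=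
    ((hf.continuousOn_Ici r x).mono fun u hu => hrσ.trans hu.1).sub
      ((hf.continuousOn_Ici r' x').mono fun u hu => hr'σ.trans hu.1)
  obtain ⟨τ₀, ⟨hστ₀, hτ₀τ⟩, hmeet⟩ :=
    intermediate_value_Icc hστ hcont ⟨sub_nonpos.2 h, sub_nonneg.2 hlt.le⟩
  have hmeet' : f r x τ = f r' x' τ := by
    rw [← hf.apply_apply (hrσ.trans hστ₀) hτ₀τ, ← hf.apply_apply (hr'σ.trans hστ₀) hτ₀τ,
      sub_eq_zero.1 hmeet]
  exact hlt.ne' hmeet'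

theorem monotone_start (hf : IsFlow f) {r σ : ℝ} (hrσ : r ≤ σ) : Monotone fun x => f r x σ :=
  fun x y hxy => hf.no_crossing le_rfl le_rfl hrσ (by rwa [hf.apply_self, hf.apply_self])

theorem flow_le_of_le_start (hf : IsFlow f) {r σ τ x y : ℝ} (hrσ : r ≤ σ) (hστ : σ ≤ τ)
    (h : f r x σ ≤ y) : f r x τ ≤ f σ y τ :=
  hf.no_crossing hrσ le_rfl hστ (by rwa [hf.apply_self])

theorem flow_le_of_start_le (hf : IsFlow f) {r σ τ x y : ℝ} (hrσ : r ≤ σ) (hστ : σ ≤ τ)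
    (h : y ≤ f r x σ) : f σ y τ ≤ f r x τ :=
  hf.no_crossing le_rfl hrσ hστ (by rwa [hf.apply_self])

theorem eventually_flow_lt (hf : IsFlow f) {r t y c : ℝ} (hrt : r ≤ t) (hy : y ∉ rangeAt f r)
    (hc : f r y t < c) : ∀ᶠ w in 𝓝[>] y, f r w t < c :=
  ((hf.continuousWithinAt_Ici hrt hy).mono Ioi_subset_Ici_self).eventually
    (eventually_lt_nhds hc)

theorem exists_common_start (hf : IsFlow f) {s a a' : ℝ} (ha : a ∈ rangeAt f s)
    (ha' : a' ∈ rangeAt f s) : ∃ ρ < s, ∃ w w', f ρ w s = a ∧ f ρ w' s = a' := by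
  obtain ⟨r, z, hrs, rfl⟩ := ha
  obtain ⟨r', z', hr's, rfl⟩ := ha'
  have hρs : max r r' < s := max_lt hrs hr's
  exact ⟨max r r', hρs, f r z (max r r'), f r' z' (max r r'),
    hf.apply_apply (le_max_left r r') hρs.le, hf.apply_apply (le_max_right r r') hρs.le⟩

theorem exists_rat_time_lt (hf : IsFlow f) {ρ s w w' : ℝ} (hρs : ρ < s) (hww' : w < w') :
    ∃ p : ℚ, ρ < p ∧ (p : ℝ) < s ∧ f ρ w p < f ρ w' p := by
  have hcont : ContinuousWithinAt (fun τ => f ρ w' τ - f ρ w τ) (Ioi ρ) ρ :=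
    (((hf.continuousOn_Ici ρ w').sub (hf.continuousOn_Ici ρ w)) ρ self_mem_Ici).mono
      Ioi_subset_Ici_self
  have hpos : ∀ᶠ τ in 𝓝[>] ρ, 0 < f ρ w' τ - f ρ w τ :=
    hcont.eventually (eventually_gt_nhds (by simpa [hf.apply_self] using hww'))
  obtain ⟨b, hρb, hsub⟩ := mem_nhdsGT_iff_exists_Ioo_subset.mp (hpos.and (Ioo_mem_nhdsGT hρs))
  obtain ⟨p, hρp, hpb⟩ := exists_rat_btwn (mem_Ioi.1 hρb)
  obtain ⟨hp, -, hps⟩ := hsub ⟨hρp, hpb⟩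
  exact ⟨p, hρp, hps, sub_pos.1 hp⟩

theorem exists_start_of_lt (hf : IsFlow f) {s t x c : ℝ} (hst : s ≤ t) (h : f s x t < c) :
    ∃ ρ < s, ∃ w w', w < w' ∧ x ≤ f ρ w s ∧ f ρ w' t < c := by
  by_cases hx : x ∈ rangeAt f s
  · obtain ⟨r, z, hrs, rfl⟩ := hx
    obtain ⟨ρ, y, hρs, hy, hzy⟩ := hf.exists_notMem_rangeAt z hrs
    have hyc : f ρ y t < c := by rwa [← hf.apply_apply hρs.le hst, ← hzy]
    obtain ⟨w', hw'c, hyw'⟩ :=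
      ((hf.eventually_flow_lt (hρs.le.trans hst) hy hyc).and self_mem_nhdsWithin).exists
    obtain ⟨w, hyw, hww'⟩ := exists_between hyw'
    exact ⟨ρ, hρs, w, w', hww', hzy ▸ hf.monotone_start hρs.le hyw.le, hw'c⟩
  · obtain ⟨b, hxb, hsub⟩ := mem_nhdsGT_iff_exists_Ioo_subset.mp (hf.eventually_flow_lt hst hx h)
    obtain ⟨a', ha', hxa', ha'b⟩ := (hf.dense_rangeAt s).exists_between hxb
    obtain ⟨a, ha, hxa, haa'⟩ := (hf.dense_rangeAt s).exists_between hxa'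
    obtain ⟨ρ, hρs, w, w', rfl, rfl⟩ := hf.exists_common_start ha ha'
    refine ⟨ρ, hρs, w, w', (hf.monotone_start hρs.le).reflect_lt haa', hxa.le, ?_⟩
    rw [← hf.apply_apply hρs.le hst]
    exact hsub ⟨hxa', ha'b⟩

theorem exists_rat_of_start (hf : IsFlow f) {ρ s t x c w w' : ℝ} (hρs : ρ < s) (hst : s ≤ t)
    (hww' : w < w') (hx : x ≤ f ρ w s) (hc : f ρ w' t < c) :
    ∃ p u : ℚ, (p : ℝ) < s ∧ x ≤ f p u s ∧ f p u t < c := by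
  obtain ⟨p, hρp, hps, hlt⟩ := hf.exists_rat_time_lt hρs hww'
  obtain ⟨u, hwu, huw'⟩ := exists_rat_btwn hlt
  exact ⟨p, u, hps, hx.trans (hf.flow_le_of_le_start hρp.le hps.le hwu.le),
    (hf.flow_le_of_start_le hρp.le (hps.le.trans hst) huw'.le).trans_lt hc⟩

end IsFlow

/-- key relation expressing `f s x t < c` via rational starting points. -/
theorem flow_lt_iff_exists_rat (f : ℝ → ℝ → ℝ → ℝ) (hf : IsFlow f)
    (s t x c : ℝ) (hst : s ≤ t) :
    f s x t < c ↔ ∃ p u : ℚ, (p : ℝ) < s ∧ x ≤ f p u s ∧ f p u t < c := by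
  constructor
  · intro h
    obtain ⟨ρ, hρs, w, w', hww', hx, hc⟩ := hf.exists_start_of_lt hst h
    exact hf.exists_rat_of_start hρs hst hww' hx hc
  · rintro ⟨p, u, hps, hx, hc⟩
    exact (hf.flow_le_of_start_le hps.le hst hx).trans_lt hc
end

section
/- Let g : [0,∞) → [0,1) be a strictly increasing homeomorphism with g(0) = 0, and let g⁻¹ denote its inverse. Define, for (s,x) ∈ ℝ² and t ≥ s, f(s,x;t) = ⌊x⌋ + g(t − s + g⁻¹(x − ⌊x⌋)), where ⌊x⌋ is the integer part of x. Then f belongs to the space of flows 𝔽: each f(s,x;·) is continuous with f(s,x;s) = x, f satisfies the flow property F1, the range R_s(f) equals ℝ ∖ ℤ for every s (hence is dense), x ↦ f(s,x;t) is right-continuous at every x ∉ R_s(f), and every trajectory starts from a fresh point in the sense of F4. -/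
open Set

theorem Int.fract_mem_Ico {R : Type*} [Ring R] [LinearOrder R] [FloorRing R] [IsOrderedRing R]
    (x : R) : Int.fract x ∈ Ico (0 : R) 1 :=
  ⟨Int.fract_nonneg x, Int.fract_lt_one x⟩

noncomputable def fractFlow (g ginv : ℝ → ℝ) (s x t : ℝ) : ℝ :=
  ⌊x⌋ + g (t - s + ginv (Int.fract x))

section

variable {g ginv : ℝ → ℝ}

theorem sub_add_ginv_fract_nonneg (hginv : MapsTo ginv (Ico 0 1) (Ici 0)) {s t : ℝ}
    (hst : s ≤ t) (x : ℝ) : 0 ≤ t - s + ginv (Int.fract x) := by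
  have : 0 ≤ ginv (Int.fract x) := hginv (Int.fract_mem_Ico x)
  linarith

theorem fractFlow_self (hright : ∀ y ∈ Ico (0 : ℝ) 1, g (ginv y) = y) (s x : ℝ) :
    fractFlow g ginv s x s = x := by
  simp [fractFlow, hright _ (Int.fract_mem_Ico x), Int.floor_add_fract]

theorem fractFlow_intCast (hginv0 : ginv 0 = 0) (s t : ℝ) (n : ℤ) :
    fractFlow g ginv s n t = n + g (t - s) := by
  simp [fractFlow, hginv0]

theorem fract_fractFlow (hg : MapsTo g (Ici 0) (Ico 0 1)) (hginv : MapsTo ginv (Ico 0 1) (Ici 0))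
    {s t : ℝ} (hst : s ≤ t) (x : ℝ) :
    Int.fract (fractFlow g ginv s x t) = g (t - s + ginv (Int.fract x)) := by
  rw [fractFlow, Int.fract_intCast_add, Int.fract_eq_self]
  exact hg (sub_add_ginv_fract_nonneg hginv hst x)

theorem floor_fractFlow (hg : MapsTo g (Ici 0) (Ico 0 1)) (hginv : MapsTo ginv (Ico 0 1) (Ici 0))
    {s t : ℝ} (hst : s ≤ t) (x : ℝ) : ⌊fractFlow g ginv s x t⌋ = ⌊x⌋ := by
  rw [fractFlow, Int.floor_intCast_add, add_eq_left, Int.floor_eq_zero_iff]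
  exact hg (sub_add_ginv_fract_nonneg hginv hst x)

theorem fractFlow_fractFlow (hg : MapsTo g (Ici 0) (Ico 0 1))
    (hginv : MapsTo ginv (Ico 0 1) (Ici 0)) (hleft : ∀ x ∈ Ici (0 : ℝ), ginv (g x) = x)
    {r s t : ℝ} (hrs : r ≤ s) (x : ℝ) :
    fractFlow g ginv s (fractFlow g ginv r x s) t = fractFlow g ginv r x t := by
  rw [fractFlow, floor_fractFlow hg hginv hrs, fract_fractFlow hg hginv hrs,
    hleft _ (sub_add_ginv_fract_nonneg hginv hrs x), fractFlow]
  congr 2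
  ring

theorem fractFlow_eq_fractFlow_floor (hginv0 : ginv 0 = 0) (s x t : ℝ) :
    fractFlow g ginv s x t = fractFlow g ginv (s - ginv (Int.fract x)) ⌊x⌋ t := by
  rw [fractFlow_intCast hginv0, fractFlow]
  congr 2
  ring

theorem continuousOn_fractFlow_time (hgcont : ContinuousOn g (Ici 0))
    (hginv : MapsTo ginv (Ico 0 1) (Ici 0)) (s x : ℝ) :
    ContinuousOn (fractFlow g ginv s x) (Ici s) :=
  continuousOn_const.add <|
    hgcont.comp (by fun_prop) fun _ ht => sub_add_ginv_fract_nonneg hginv ht x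

theorem continuousOn_fractFlow_Ico (hgcont : ContinuousOn g (Ici 0))
    (hginvcont : ContinuousOn ginv (Ico 0 1)) (hginv : MapsTo ginv (Ico 0 1) (Ici 0))
    {s t : ℝ} (hst : s ≤ t) (n : ℤ) :
    ContinuousOn (fun y => fractFlow g ginv s y t) (Ico (n : ℝ) (n + 1)) := by
  have hfract : ContinuousOn (fun y => ginv (Int.fract y)) (Ico (n : ℝ) (n + 1)) :=
    hginvcont.comp (continuousOn_fract n) fun y _ => Int.fract_mem_Ico y
  exact (continuousOn_floor n).add <|
    hgcont.comp (continuousOn_const.add hfract) fun y _ => sub_add_ginv_fract_nonneg hginv hst y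

theorem continuousWithinAt_fractFlow_Ici (hgcont : ContinuousOn g (Ici 0))
    (hginvcont : ContinuousOn ginv (Ico 0 1)) (hginv : MapsTo ginv (Ico 0 1) (Ici 0))
    {s t : ℝ} (hst : s ≤ t) (x : ℝ) :
    ContinuousWithinAt (fun y => fractFlow g ginv s y t) (Ici x) x := by
  have hx : x ∈ Ico (⌊x⌋ : ℝ) (⌊x⌋ + 1) := ⟨Int.floor_le x, Int.lt_floor_add_one x⟩
  exact (continuousOn_fractFlow_Ico hgcont hginvcont hginv hst ⌊x⌋ x hx).mono_of_mem_nhdsWithin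
    (Ico_mem_nhdsGE_of_mem hx)

theorem rangeAt_fractFlow (hg0 : g 0 = 0) (hgmono : StrictMonoOn g (Ici 0))
    (hg : MapsTo g (Ici 0) (Ico 0 1)) (hginv : MapsTo ginv (Ico 0 1) (Ici 0))
    (hright : ∀ y ∈ Ico (0 : ℝ) 1, g (ginv y) = y) (hginv0 : ginv 0 = 0) (s : ℝ) :
    rangeAt (fractFlow g ginv) s = (range ((↑) : ℤ → ℝ))ᶜ := by
  ext y
  simp only [rangeAt, mem_ofPred_eq, mem_compl_iff, ← Int.fract_eq_zero_iff]
  constructor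
  · rintro ⟨r, x, hrs, rfl⟩
    have hpos : 0 < s - r + ginv (Int.fract x) := by
      linarith [mem_Ici.mp (hginv (Int.fract_mem_Ico x))]
    rw [fract_fractFlow hg hginv hrs.le]
    exact (hg0 ▸ hgmono self_mem_Ici hpos.le hpos).ne'
  · intro hy
    have hpos : 0 < ginv (Int.fract y) := by
      refine (hginv (Int.fract_mem_Ico y)).lt_of_ne fun h => hy ?_
      rw [← hright _ (Int.fract_mem_Ico y), ← h, hg0]
    refine ⟨s - ginv (Int.fract y), ⌊y⌋, by linarith, ?_⟩
    rw [fractFlow_intCast hginv0, sub_sub_cancel, hright _ (Int.fract_mem_Ico y),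
      Int.floor_add_fract]

theorem isFlow_fractFlow (hg0 : g 0 = 0) (hgmono : StrictMonoOn g (Ici 0))
    (hgcont : ContinuousOn g (Ici 0)) (hg : MapsTo g (Ici 0) (Ico 0 1))
    (hleft : ∀ x ∈ Ici (0 : ℝ), ginv (g x) = x) (hright : ∀ y ∈ Ico (0 : ℝ) 1, g (ginv y) = y)
    (hginvcont : ContinuousOn ginv (Ico 0 1)) (hginv : MapsTo ginv (Ico 0 1) (Ici 0))
    (hginv0 : ginv 0 = 0) : IsFlow (fractFlow g ginv) := by
  have hrange := rangeAt_fractFlow hg0 hgmono hg hginv hright hginv0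
  refine ⟨fractFlow_self hright, continuousOn_fractFlow_time hgcont hginv,
    fun r s t x hrs _ => fractFlow_fractFlow hg hginv hleft hrs x, fun s => ?_,
    fun s t hst x _ => continuousWithinAt_fractFlow_Ici hgcont hginvcont hginv hst x,
    fun s t x hst =>
      ⟨s - ginv (Int.fract x), ⌊x⌋, ?_, ?_, fractFlow_eq_fractFlow_floor hginv0 s x t⟩⟩
  · rw [hrange]
    exact (countable_range _).dense_compl ℝ
  · linarith [mem_Ici.mp (hginv (Int.fract_mem_Ico x))]
  · simp [hrange]

end

/-- for a strictly increasing homeomorphism `g : [0,∞) → [0,1)` with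
`g 0 = 0` and inverse `ginv`, the family `f(s,x;t) = ⌊x⌋ + g(t - s + g⁻¹(x - ⌊x⌋))`
belongs to the space of flows 𝔽, and its range at every time `s` equals `ℝ ∖ ℤ`. -/
theorem example_flow_isFlow (g ginv : ℝ → ℝ)
    (hg0 : g 0 = 0)
    (hgmono : StrictMonoOn g (Set.Ici (0 : ℝ)))
    (hgcont : ContinuousOn g (Set.Ici (0 : ℝ)))
    (hgimage : g '' Set.Ici (0 : ℝ) = Set.Ico (0 : ℝ) 1)
    (hginv_left : ∀ x ∈ Set.Ici (0 : ℝ), ginv (g x) = x)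
    (hginv_right : ∀ y ∈ Set.Ico (0 : ℝ) 1, g (ginv y) = y)
    (hginv_cont : ContinuousOn ginv (Set.Ico (0 : ℝ) 1))
    (hginv_maps : Set.MapsTo ginv (Set.Ico (0 : ℝ) 1) (Set.Ici (0 : ℝ))) :
    IsFlow (fun s x t => (⌊x⌋ : ℝ) + g (t - s + ginv (x - ⌊x⌋))) ∧
    ∀ s : ℝ, rangeAt (fun s x t => (⌊x⌋ : ℝ) + g (t - s + ginv (x - ⌊x⌋))) s
      = (Set.range ((↑) : ℤ → ℝ))ᶜ := by
  have hg_maps : MapsTo g (Ici 0) (Ico 0 1) := hgimage ▸ mapsTo_image g _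
  have hginv0 : ginv 0 = 0 := by simpa [hg0] using hginv_left 0 self_mem_Ici
  exact ⟨isFlow_fractFlow hg0 hgmono hgcont hg_maps hginv_left hginv_right hginv_cont hginv_maps
    hginv0, rangeAt_fractFlow hg0 hgmono hg_maps hginv_maps hginv_right hginv0⟩
end

section
/- Let (Y_i)_{i∈ℕ} be a skeleton satisfying conditions SP1–SP5, and define ψ(s,x;t) = inf{Y_i(t) : p_i ≤ s, Y_i(s) ≥ x} for s ≤ t and x ∈ ℝ. Then for all s ≤ t and x ∈ ℝ the set {Y_i(t) : p_i ≤ s, Y_i(s) ≥ x} is nonempty and bounded below; ψ(s,x;s) = x; for every t > s the infimum is attained, i.e. there exists i with p_i ≤ s, Y_i(s) ≥ x and ψ(s,x;t) = Y_i(t); and the map t ↦ ψ(s,x;t) is continuous on [s,∞). -/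
/-- A skeleton: continuous processes `Y i` started from an enumeration `(p i, u i)`
of ℚ², constant equal to `u i` before time `p i`, satisfying SP1–SP5. -/
structure Skeleton where
  /-- starting times (rational) -/
  p : ℕ → ℚ
  /-- starting points (rational) -/
  u : ℕ → ℚ
  /-- `(p, u)` enumerates ℚ² -/
  enum : Function.Bijective (fun i => (p i, u i))
  /-- the processes of the skeleton -/
  Y : ℕ → ℝ → ℝ
  cont : ∀ i, Continuous (Y i)
  init : ∀ i, ∀ t : ℝ, t ≤ (p i : ℝ) → Y i t = (u i : ℝ)
  /-- SP1 -/
  sp1 : ∀ i j, (p i : ℝ) < (p j : ℝ) → Y i (p j : ℝ) ≠ (u j : ℝ)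
  /-- SP2: coalescence -/
  sp2 : ∀ i j, ∀ t₀ : ℝ, i ≠ j → (p i : ℝ) ≤ t₀ → (p j : ℝ) ≤ t₀ →
    Y i t₀ = Y j t₀ → ∀ t : ℝ, t₀ ≤ t → Y i t = Y j t
  /-- SP3: density of the range -/
  sp3 : ∀ s : ℝ, Dense {y : ℝ | ∃ i, (p i : ℝ) < s ∧ Y i s = y}
  /-- SP4: local finiteness -/
  sp4 : ∀ s t a b : ℝ, s < t → a < b →
    Set.Finite {y : ℝ | ∃ i, (p i : ℝ) ≤ s ∧ Y i s ∈ Set.Ioo a b ∧ Y i t = y}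
  /-- SP5: right-continuity at skeleton points -/
  sp5 : ∀ i, ∀ ε : ℝ, 0 < ε → ∃ δ : ℝ, 0 < δ ∧ ∀ j, p j = p i →
    (u i : ℝ) < (u j : ℝ) → (u j : ℝ) < (u i : ℝ) + δ →
    ∀ t : ℝ, (p i : ℝ) ≤ t → Y j t - Y i t ≤ ε

/-- The flow built from the skeleton:
`ψ(s,x;t) = inf {Y i t : p i ≤ s, Y i s ≥ x}`. -/
noncomputable def Skeleton.psi (S : Skeleton) (s x t : ℝ) : ℝ :=
  sInf {y : ℝ | ∃ i, (S.p i : ℝ) ≤ s ∧ x ≤ S.Y i s ∧ S.Y i t = y}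

lemma Skeleton.mono (S : Skeleton) {i j : ℕ} {s : ℝ} (hi : (S.p i : ℝ) ≤ s)
    (hj : (S.p j : ℝ) ≤ s) (h : S.Y j s ≤ S.Y i s) {r : ℝ} (hr : s ≤ r) :
    S.Y j r ≤ S.Y i r := by
  by_contra hlt
  push_neg at hlt
  have hij : i ≠ j := by rintro rfl; exact lt_irrefl _ hlt
  have hcont : ContinuousOn (fun u => S.Y i u - S.Y j u) (Set.Icc s r) :=
    ((S.cont i).sub (S.cont j)).continuousOn
  have h0 : (0:ℝ) ∈ Set.Icc (S.Y i r - S.Y j r) (S.Y i s - S.Y j s) :=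
    ⟨by linarith, by linarith⟩
  obtain ⟨t₀, ht₀, heq⟩ := intermediate_value_Icc' hr hcont h0
  have heq' : S.Y i t₀ = S.Y j t₀ := by
    have : S.Y i t₀ - S.Y j t₀ = 0 := heq
    linarith
  have := S.sp2 i j t₀ hij (hi.trans ht₀.1) (hj.trans ht₀.1) heq' r ht₀.2
  linarith

lemma Skeleton.pick (S : Skeleton) (s a b : ℝ) (hab : a < b) :
    ∃ i, (S.p i : ℝ) ≤ s ∧ S.Y i s ∈ Set.Ioo a b := by
  obtain ⟨y, ⟨i, hp, hy⟩, hyo⟩ :=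
    (S.sp3 s).exists_mem_open isOpen_Ioo (Set.nonempty_Ioo.2 hab)
  exact ⟨i, hp.le, hy ▸ hyo⟩

lemma cont_finset_inf' {I : Finset ℕ} (hne : I.Nonempty) (f : ℕ → ℝ → ℝ)
    (hf : ∀ j, Continuous (f j)) :
    Continuous fun r => I.inf' hne fun j => f j r :=
  continuous_iff_continuousAt.2 fun _ =>
    ContinuousAt.finset_inf'_apply hne fun j _ => (hf j).continuousAt

lemma Skeleton.key (S : Skeleton) (s x t₁ : ℝ) (hst : s < t₁) (i₀ : ℕ)
    (hp₀ : (S.p i₀ : ℝ) ≤ s) (hx₀ : x ≤ S.Y i₀ s) :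
    ∃ I : Finset ℕ, ∃ hne : I.Nonempty,
      (∀ j ∈ I, (S.p j : ℝ) ≤ s ∧ x ≤ S.Y j s) ∧
      ∀ r, t₁ ≤ r →
        IsLeast {y : ℝ | ∃ i, (S.p i : ℝ) ≤ s ∧ x ≤ S.Y i s ∧ S.Y i r = y}
          (I.inf' hne fun j => S.Y j r) := by
  classical
  set M := S.Y i₀ s with hM
  set T : Set ℕ := {i | (S.p i : ℝ) ≤ s ∧ x ≤ S.Y i s ∧ S.Y i s ≤ M} with hT
  set V : Set ℝ := (fun i => S.Y i t₁) '' T with hVdef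
  have hVfin : V.Finite := by
    apply (S.sp4 s t₁ (x - 1) (M + 1) hst (by linarith)).subset
    rintro v ⟨i, ⟨h1, h2, h3⟩, rfl⟩
    exact ⟨i, h1, ⟨by linarith, by linarith⟩, rfl⟩
  set rep : ℝ → ℕ := fun v => if h : ∃ i, i ∈ T ∧ S.Y i t₁ = v then h.choose else 0
    with hrepdef
  have hrep : ∀ v ∈ V, rep v ∈ T ∧ S.Y (rep v) t₁ = v := by
    intro v hv
    obtain ⟨i, hiT, hiv⟩ := hv
    have h : ∃ i, i ∈ T ∧ S.Y i t₁ = v := ⟨i, hiT, hiv⟩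
    simp only [hrepdef, dif_pos h]
    exact h.choose_spec
  refine ⟨insert i₀ (hVfin.image rep).toFinset, Finset.insert_nonempty _ _, ?_, ?_⟩
  · intro j hj
    rcases Finset.mem_insert.1 hj with rfl | hj
    · exact ⟨hp₀, hx₀⟩
    · obtain ⟨v, hv, rfl⟩ := (Set.Finite.mem_toFinset _).1 hj
      exact ⟨(hrep v hv).1.1, (hrep v hv).1.2.1⟩
  · intro r hr
    have hsr : s ≤ r := hst.le.trans hr
    constructor
    · obtain ⟨j, hjI, hj⟩ :=
        Finset.exists_mem_eq_inf' (Finset.insert_nonempty i₀ _) fun j => S.Y j r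
      rcases Finset.mem_insert.1 hjI with rfl | hj'
      · exact ⟨j, hp₀, hx₀, hj.symm⟩
      · obtain ⟨v, hv, rfl⟩ := (Set.Finite.mem_toFinset _).1 hj'
        exact ⟨rep v, (hrep v hv).1.1, (hrep v hv).1.2.1, hj.symm⟩
    · rintro y ⟨i, h1, h2, rfl⟩
      by_cases h3 : S.Y i s ≤ M
      · have hv : S.Y i t₁ ∈ V := ⟨i, ⟨h1, h2, h3⟩, rfl⟩
        set j := rep (S.Y i t₁) with hj
        have hjT := (hrep _ hv).1
        have hYj : S.Y j t₁ = S.Y i t₁ := (hrep _ hv).2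
        have hjr : S.Y j r = S.Y i r := by
          rcases eq_or_ne j i with h | hne
          · rw [h]
          · exact S.sp2 j i t₁ hne (hjT.1.trans hst.le) (h1.trans hst.le) hYj r hr
        have hjI : j ∈ insert i₀ (hVfin.image rep).toFinset :=
          Finset.mem_insert.2 (Or.inr ((Set.Finite.mem_toFinset _).2 ⟨_, hv, rfl⟩))
        calc _ ≤ S.Y j r := Finset.inf'_le (fun j => S.Y j r) hjI
          _ = S.Y i r := hjr
      · push_neg at h3
        have := S.mono h1 hp₀ h3.le hsr
        calc _ ≤ S.Y i₀ r := Finset.inf'_le (fun j => S.Y j r) (Finset.mem_insert_self _ _)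
          _ ≤ S.Y i r := this

/-- basic properties of `ψ`: the defining set is nonempty and bounded
below, `ψ(s,x;s) = x`, for `t > s` the infimum is attained on the skeleton, and
`t ↦ ψ(s,x;t)` is continuous on `[s,∞)`. -/
theorem psi_basic_properties (S : Skeleton) (s t x : ℝ) (hst : s ≤ t) :
    {y : ℝ | ∃ i, (S.p i : ℝ) ≤ s ∧ x ≤ S.Y i s ∧ S.Y i t = y}.Nonempty ∧
    BddBelow {y : ℝ | ∃ i, (S.p i : ℝ) ≤ s ∧ x ≤ S.Y i s ∧ S.Y i t = y} ∧
    S.psi s x s = x ∧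
    (s < t → ∃ i, (S.p i : ℝ) ≤ s ∧ x ≤ S.Y i s ∧ S.psi s x t = S.Y i t) ∧
    ContinuousOn (fun r => S.psi s x r) (Set.Ici s) := by
  classical
  have hNE : ∀ r : ℝ,
      {y : ℝ | ∃ i, (S.p i : ℝ) ≤ s ∧ x ≤ S.Y i s ∧ S.Y i r = y}.Nonempty := by
    intro r
    obtain ⟨i, hp, hio⟩ := S.pick s x (x + 1) (by linarith)
    exact ⟨S.Y i r, i, hp, hio.1.le, rfl⟩
  have hBdd : ∀ r : ℝ, s ≤ r →
      BddBelow {y : ℝ | ∃ i, (S.p i : ℝ) ≤ s ∧ x ≤ S.Y i s ∧ S.Y i r = y} := by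
    intro r hr
    obtain ⟨j, hpj, hjo⟩ := S.pick s (x - 1) x (by linarith)
    refine ⟨S.Y j r, ?_⟩
    rintro y ⟨i, h1, h2, rfl⟩
    exact S.mono h1 hpj (le_of_lt (lt_of_lt_of_le hjo.2 h2)) hr
  have hlow : ∀ ε : ℝ, 0 < ε → ∃ j, (S.p j : ℝ) ≤ s ∧ x - ε < S.Y j s ∧ S.Y j s < x ∧
      ∀ r : ℝ, s ≤ r → S.Y j r ≤ S.psi s x r := by
    intro ε hε
    obtain ⟨j, hpj, hjo⟩ := S.pick s (x - ε) x (by linarith)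
    refine ⟨j, hpj, hjo.1, hjo.2, fun r hr => le_csInf (hNE r) ?_⟩
    rintro y ⟨i, h1, h2, rfl⟩
    exact S.mono h1 hpj (le_of_lt (lt_of_lt_of_le hjo.2 h2)) hr
  have hpsis : S.psi s x s = x := by
    refine le_antisymm ?_ (le_csInf (hNE s) ?_)
    · by_contra h
      push_neg at h
      obtain ⟨i, hp, hio⟩ := S.pick s x (S.psi s x s) h
      have hle : S.psi s x s ≤ S.Y i s := csInf_le (hBdd s le_rfl) ⟨i, hp, hio.1.le, rfl⟩
      exact absurd (lt_of_le_of_lt hle hio.2) (lt_irrefl _)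
    · rintro y ⟨i, _, h2, rfl⟩; exact h2
  have hatt : s < t → ∃ i, (S.p i : ℝ) ≤ s ∧ x ≤ S.Y i s ∧ S.psi s x t = S.Y i t := by
    intro h
    obtain ⟨i₀, hp₀, hio⟩ := S.pick s x (x + 1) (by linarith)
    obtain ⟨I, hne, hmem, hleast⟩ := S.key s x t h i₀ hp₀ hio.1.le
    have hL := hleast t le_rfl
    obtain ⟨i, h1, h2, h3⟩ := hL.1
    refine ⟨i, h1, h2, ?_⟩
    have : S.psi s x t = I.inf' hne fun j => S.Y j t := hL.csInf_eq
    rw [this, ← h3]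
  have hcont : ContinuousOn (fun r => S.psi s x r) (Set.Ici s) := by
    intro t' ht'
    rcases eq_or_lt_of_le (Set.mem_Ici.mp ht') with h | hlt
    · -- t' = s
      subst h
      rw [Metric.continuousWithinAt_iff]
      intro ε hε
      obtain ⟨i, hpi, hio⟩ := S.pick s x (x + ε / 2) (by linarith)
      obtain ⟨j, hpj, hjo1, hjo2, hjlow⟩ := hlow (ε / 2) (by linarith)
      obtain ⟨δ₁, hδ₁, hY1⟩ := Metric.continuous_iff.mp (S.cont i) s (ε / 2) (by linarith)
      obtain ⟨δ₂, hδ₂, hY2⟩ := Metric.continuous_iff.mp (S.cont j) s (ε / 2) (by linarith)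
      refine ⟨min δ₁ δ₂, by positivity, ?_⟩
      intro r hr hdist
      have hups : S.psi s x r ≤ S.Y i r := csInf_le (hBdd r hr) ⟨i, hpi, hio.1.le, rfl⟩
      have hlows : S.Y j r ≤ S.psi s x r := hjlow r hr
      have hd1 : |S.Y i r - S.Y i s| < ε / 2 := by
        rw [← Real.dist_eq]
        exact hY1 r (lt_of_lt_of_le hdist (min_le_left _ _))
      have hd2 : |S.Y j r - S.Y j s| < ε / 2 := by
        rw [← Real.dist_eq]
        exact hY2 r (lt_of_lt_of_le hdist (min_le_right _ _))
      rw [abs_lt] at hd1 hd2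
      simp only [Real.dist_eq, hpsis, abs_lt]
      constructor
      · have h1 := hd2.1
        have h2 := hjlow r hr
        linarith
      · have h1 := hd1.2
        have h2 := hio.2
        linarith
    · obtain ⟨i₀, hp₀, hio⟩ := S.pick s x (x + 1) (by linarith)
      have h1 : s < (s + t') / 2 := by linarith
      have h2 : (s + t') / 2 < t' := by linarith
      obtain ⟨I, hne, hmem, hleast⟩ := S.key s x ((s + t') / 2) h1 i₀ hp₀ hio.1.le
      have hg : Continuous fun r => I.inf' hne fun j => S.Y j r :=
        cont_finset_inf' hne _ S.cont
      have heq : (fun r => S.psi s x r) =ᶠ[nhds t'] fun r => I.inf' hne fun j => S.Y j r := by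
        filter_upwards [Ici_mem_nhds h2] with r hr
        exact (hleast r hr).csInf_eq
      exact (hg.continuousAt.congr heq.symm).continuousWithinAt
  exact ⟨hNE t, hBdd t hst, hpsis, hatt, hcont⟩
end

section
/- Let (Y_i)_{i∈ℕ} be a skeleton satisfying conditions SP1–SP5, and define ψ(s,x;t) = inf{Y_i(t) : p_i ≤ s, Y_i(s) ≥ x} for s ≤ t and x ∈ ℝ. Then ψ satisfies the flow property F1: for all r ≤ s ≤ t and all x ∈ ℝ, ψ(s, ψ(r,x;s); t) = ψ(r,x;t). -/
namespace Skeleton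

variable (S : Skeleton)

/-- Order preservation: paths started before `s` keep their order after `s`. -/
lemma mono_s8 (i j : ℕ) (s : ℝ) (hi : (S.p i : ℝ) ≤ s) (hj : (S.p j : ℝ) ≤ s)
    (h : S.Y i s ≤ S.Y j s) : ∀ t, s ≤ t → S.Y i t ≤ S.Y j t := by
  intro t hst
  by_contra hlt
  push_neg at hlt
  rcases eq_or_ne i j with rfl | hij
  · exact absurd rfl (ne_of_gt hlt)
  have hc : ContinuousOn (fun u => S.Y i u - S.Y j u) (Set.Icc s t) :=
    ((S.cont i).sub (S.cont j)).continuousOn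
  have h0 : (0:ℝ) ∈ Set.Icc (S.Y i s - S.Y j s) (S.Y i t - S.Y j t) :=
    ⟨by linarith, by linarith⟩
  obtain ⟨t₀, ht₀, heq⟩ := intermediate_value_Icc hst hc h0
  have heq' : S.Y i t₀ - S.Y j t₀ = 0 := heq
  have := S.sp2 i j t₀ hij (hi.trans ht₀.1) (hj.trans ht₀.1) (by linarith) t ht₀.2
  linarith

/-- From SP3: there is a path started strictly before `s` whose value at `s`
lies in `(a,b)`. -/
lemma exists_between' (s a b : ℝ) (hab : a < b) :
    ∃ i, (S.p i : ℝ) < s ∧ a < S.Y i s ∧ S.Y i s < b := by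
  obtain ⟨y, ⟨i, hp, hy⟩, hy1, hy2⟩ := (S.sp3 s).exists_between hab
  exact ⟨i, hp, by rw [hy]; exact hy1, by rw [hy]; exact hy2⟩

lemma set_nonempty (r x t : ℝ) :
    {y : ℝ | ∃ i, (S.p i : ℝ) ≤ r ∧ x ≤ S.Y i r ∧ S.Y i t = y}.Nonempty := by
  obtain ⟨i, hp, h1, _⟩ := S.exists_between' r x (x + 1) (by linarith)
  exact ⟨S.Y i t, i, hp.le, h1.le, rfl⟩

lemma set_bddBelow (r t x : ℝ) (hrt : r ≤ t) :
    BddBelow {y : ℝ | ∃ i, (S.p i : ℝ) ≤ r ∧ x ≤ S.Y i r ∧ S.Y i t = y} := by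
  obtain ⟨j, hpj, _, hj2⟩ := S.exists_between' r (x - 1) x (by linarith)
  refine ⟨S.Y j t, ?_⟩
  rintro y ⟨i, hpi, hxi, rfl⟩
  exact S.mono_s8 j i r hpj.le hpi (by linarith) t hrt

lemma psi_le_of_mem (s x t : ℝ) (hst : s ≤ t) (i : ℕ)
    (hp : (S.p i : ℝ) ≤ s) (hx : x ≤ S.Y i s) : S.psi s x t ≤ S.Y i t :=
  csInf_le (S.set_bddBelow s t x hst) ⟨i, hp, hx, rfl⟩

lemma psi_self (s x : ℝ) : S.psi s x s = x := by
  apply le_antisymm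
  · apply le_of_forall_pos_le_add
    intro ε hε
    obtain ⟨i, hp, h1, h2⟩ := S.exists_between' s x (x + ε) (by linarith)
    exact (S.psi_le_of_mem s x s le_rfl i hp.le h1.le).trans h2.le
  · exact le_csInf (S.set_nonempty s x s) (by rintro y ⟨i, _, hx, rfl⟩; exact hx)

/-- For `r < s` the infimum defining `ψ(r,x;s)` is attained. -/
lemma attained (r s x : ℝ) (hrs : r < s) :
    ∃ i, (S.p i : ℝ) ≤ r ∧ x ≤ S.Y i r ∧ S.Y i s = S.psi r x s := by
  obtain ⟨i₀, hp₀, hx₀, hx₀'⟩ := S.exists_between' r x (x + 1) (by linarith)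
  have hfin := S.sp4 r s (x - 1) (x + 2) hrs (by linarith)
  set V₁ : Set ℝ :=
    {y | ∃ i, (S.p i : ℝ) ≤ r ∧ x ≤ S.Y i r ∧ S.Y i r < x + 2 ∧ S.Y i s = y} with hV₁
  have hV₁fin : V₁.Finite := by
    apply hfin.subset
    rintro y ⟨i, h1, h2, h3, h4⟩
    exact ⟨i, h1, ⟨by linarith, h3⟩, h4⟩
  have hV₁ne : V₁.Nonempty := ⟨S.Y i₀ s, i₀, hp₀.le, hx₀.le, by linarith, rfl⟩
  obtain ⟨m, hmV, hmin⟩ := Set.exists_min_image V₁ id hV₁fin hV₁ne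
  obtain ⟨i₁, h1, h2, h3, h4⟩ := hmV
  refine ⟨i₁, h1, h2, ?_⟩
  apply le_antisymm
  · apply le_csInf (S.set_nonempty r x s)
    rintro y ⟨i, hpi, hxi, rfl⟩
    by_cases hc : S.Y i r < x + 2
    · have := hmin (S.Y i s) ⟨i, hpi, hxi, hc, rfl⟩
      simpa [h4] using this
    · push_neg at hc
      have h₀₁ : m ≤ S.Y i₀ s := hmin _ ⟨i₀, hp₀.le, hx₀.le, by linarith, rfl⟩
      have h₀i : S.Y i₀ s ≤ S.Y i s :=
        S.mono_s8 i₀ i r hp₀.le hpi (by linarith) s hrs.le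
      calc S.Y i₁ s = m := h4
        _ ≤ S.Y i₀ s := h₀₁
        _ ≤ S.Y i s := h₀i
  · exact S.psi_le_of_mem r x s hrs.le i₁ h1 h2

end Skeleton

/-- the flow `ψ` built from the skeleton satisfies the flow property F1:
for all `r ≤ s ≤ t` and `x`, `ψ(s, ψ(r,x;s); t) = ψ(r,x;t)`. -/
theorem psi_flow_property (S : Skeleton) :
    ∀ r s t x : ℝ, r ≤ s → s ≤ t → S.psi s (S.psi r x s) t = S.psi r x t := by
  intro r s t x hrs hst
  rcases eq_or_lt_of_le hrs with rfl | hrs'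
  · rw [S.psi_self]
  · obtain ⟨i₁, hp₁, hx₁, hY₁⟩ := S.attained r s x hrs'
    apply le_antisymm
    · show sInf _ ≤ sInf _
      apply csInf_le_csInf (S.set_bddBelow s t _ hst) (S.set_nonempty r x t)
      rintro y ⟨i, hpi, hxi, rfl⟩
      exact ⟨i, hpi.trans hrs, S.psi_le_of_mem r x s hrs'.le i hpi hxi, rfl⟩
    · show sInf _ ≤ sInf _
      apply le_csInf (S.set_nonempty s (S.psi r x s) t)
      rintro y ⟨j, hpj, hzj, rfl⟩
      have hle : S.Y i₁ s ≤ S.Y j s := hY₁ ▸ hzj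
      have := S.mono_s8 i₁ j s (hp₁.trans hrs'.le) hpj hle t hst
      exact le_trans (S.psi_le_of_mem r x t (hrs'.le.trans hst) i₁ hp₁ hx₁) this
end

section
/- Let (Y_i)_{i∈ℕ} be a skeleton satisfying conditions SP1–SP5, and define ψ(s,x;t) = inf{Y_i(t) : p_i ≤ s, Y_i(s) ≥ x} for s ≤ t and x ∈ ℝ. Then ψ belongs to the space of flows 𝔽; in particular, with R_s(ψ) = {ψ(r,x;s) : r < s, x ∈ ℝ}: (F2) R_s(ψ) is dense in ℝ for every s; (F3) for all s ≤ t the map x ↦ ψ(s,x;t) is right-continuous at every x ∉ R_s(ψ); and (F4) for all s < t and x ∈ ℝ there exist r < t and y ∉ R_r(ψ) with ψ(s,x;t) = ψ(r,y;t). -/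
namespace SkelAux

def cset (S : Skeleton) (s x t : ℝ) : Set ℝ :=
  {y : ℝ | ∃ i, (S.p i : ℝ) ≤ s ∧ x ≤ S.Y i s ∧ S.Y i t = y}

lemma psi_eq (S : Skeleton) (s x t : ℝ) : S.psi s x t = sInf (cset S s x t) := rfl

/-- non-crossing of skeleton trajectories -/
lemma noncross (S : Skeleton) {i j : ℕ} {r τ : ℝ} (hi : (S.p i : ℝ) ≤ r)
    (hj : (S.p j : ℝ) ≤ r) (hrτ : r ≤ τ) (h : S.Y i r ≤ S.Y j r) :
    S.Y i τ ≤ S.Y j τ := by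
  rcases eq_or_ne i j with rfl | hij
  · exact le_rfl
  by_contra hlt
  push_neg at hlt
  have hg : ContinuousOn (fun u => S.Y j u - S.Y i u) (Set.Icc r τ) :=
    ((S.cont j).sub (S.cont i)).continuousOn
  have hmem : (0 : ℝ) ∈ Set.Icc (S.Y j τ - S.Y i τ) (S.Y j r - S.Y i r) :=
    ⟨by linarith, by linarith⟩
  obtain ⟨t₀, ht₀, hval⟩ := intermediate_value_Icc' hrτ hg hmem
  have heq : S.Y j t₀ = S.Y i t₀ := by
    have : S.Y j t₀ - S.Y i t₀ = 0 := hval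
    linarith
  have := S.sp2 j i t₀ (Ne.symm hij) (hj.trans ht₀.1) (hi.trans ht₀.1) heq τ ht₀.2
  linarith

/-- SP3 gives a trajectory through any open interval at any time -/
lemma exists_mid (S : Skeleton) (s a b : ℝ) (hab : a < b) :
    ∃ i, (S.p i : ℝ) < s ∧ S.Y i s ∈ Set.Ioo a b := by
  obtain ⟨y, hy, hyU⟩ := (S.sp3 s).exists_mem_open isOpen_Ioo
    (Set.nonempty_Ioo.mpr hab)
  obtain ⟨i, hip, hiy⟩ := hy
  exact ⟨i, hip, hiy ▸ hyU⟩

lemma cset_nonempty (S : Skeleton) (s x t : ℝ) : (cset S s x t).Nonempty := by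
  obtain ⟨i, hip, hmem⟩ := exists_mid S s x (x + 1) (lt_add_one x)
  exact ⟨S.Y i t, i, hip.le, hmem.1.le, rfl⟩

/-- existence of a minimizer for `s < t` -/
lemma exists_min (S : Skeleton) (s t x : ℝ) (hst : s < t) :
    ∃ i₀, (S.p i₀ : ℝ) ≤ s ∧ x ≤ S.Y i₀ s ∧
      ∀ k, (S.p k : ℝ) ≤ s → x ≤ S.Y k s → S.Y i₀ t ≤ S.Y k t := by
  obtain ⟨j, hjp, hjmem⟩ := exists_mid S s x (x + 1) (lt_add_one x)
  have hGsub : {y : ℝ | ∃ i, (S.p i : ℝ) ≤ s ∧ S.Y i s ∈ Set.Icc x (x+1) ∧ S.Y i t = y}.Finite := by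
    apply (S.sp4 s t (x-1) (x+2) hst (by linarith)).subset
    rintro y ⟨i, h1, h2, h3⟩
    exact ⟨i, h1, ⟨by linarith [h2.1], by linarith [h2.2]⟩, h3⟩
  have hGfin : (insert (S.Y j t)
      {y : ℝ | ∃ i, (S.p i : ℝ) ≤ s ∧ S.Y i s ∈ Set.Icc x (x+1) ∧ S.Y i t = y}).Finite :=
    hGsub.insert _
  obtain ⟨m, hmG, hmin⟩ := Set.exists_min_image _ id hGfin ⟨_, Set.mem_insert _ _⟩
  have hrep : ∃ i₀, (S.p i₀ : ℝ) ≤ s ∧ x ≤ S.Y i₀ s ∧ S.Y i₀ t = m := by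
    rcases Set.mem_insert_iff.mp hmG with h | ⟨i, h1, h2, h3⟩
    · exact ⟨j, hjp.le, hjmem.1.le, h.symm⟩
    · exact ⟨i, h1, h2.1, h3⟩
  obtain ⟨i₀, h1, h2, h3⟩ := hrep
  refine ⟨i₀, h1, h2, ?_⟩
  intro k hk hxk
  rcases le_or_gt (S.Y k s) (x + 1) with hle | hgt
  · have hmem : S.Y k t ∈ insert (S.Y j t)
        {y : ℝ | ∃ i, (S.p i : ℝ) ≤ s ∧ S.Y i s ∈ Set.Icc x (x+1) ∧ S.Y i t = y} :=
      Set.mem_insert_of_mem _ ⟨k, hk, ⟨hxk, hle⟩, rfl⟩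
    have := hmin _ hmem
    rw [h3]; exact this
  · have h4 : S.Y j t ≤ S.Y k t :=
      noncross S hjp.le hk hst.le (le_of_lt (lt_trans hjmem.2 hgt))
    have h5 := hmin _ (Set.mem_insert _ _)
    rw [h3]; simp only [id] at h5 ⊢; linarith

/-- if i₀ is a minimizer then psi is its value -/
lemma psi_eq_of_min (S : Skeleton) {s x t : ℝ} {i₀ : ℕ} (h1 : (S.p i₀ : ℝ) ≤ s)
    (h2 : x ≤ S.Y i₀ s)
    (hmin : ∀ k, (S.p k : ℝ) ≤ s → x ≤ S.Y k s → S.Y i₀ t ≤ S.Y k t) :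
    S.psi s x t = S.Y i₀ t := by
  rw [psi_eq]
  apply le_antisymm
  · apply csInf_le
    · refine ⟨S.Y i₀ t, ?_⟩
      rintro y ⟨k, hk1, hk2, rfl⟩
      exact hmin k hk1 hk2
    · exact ⟨i₀, h1, h2, rfl⟩
  · refine le_csInf ⟨S.Y i₀ t, i₀, h1, h2, rfl⟩ ?_
    rintro y ⟨k, hk1, hk2, rfl⟩
    exact hmin k hk1 hk2

/-- psi started at a skeleton point follows the trajectory -/
lemma psi_start (S : Skeleton) (i : ℕ) {τ : ℝ} (h : (S.p i : ℝ) ≤ τ) :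
    S.psi (S.p i) (S.u i) τ = S.Y i τ := by
  have hinit : S.Y i (S.p i) = (S.u i : ℝ) := S.init i _ le_rfl
  apply psi_eq_of_min S le_rfl hinit.ge
  intro k hk hxk
  exact noncross S le_rfl hk h (by rw [hinit]; exact hxk)

lemma cset_bddBelow (S : Skeleton) {s t : ℝ} (hst : s ≤ t) (x : ℝ) :
    BddBelow (cset S s x t) := by
  rcases hst.eq_or_lt with rfl | hlt
  · refine ⟨x, ?_⟩
    rintro y ⟨k, _, hk2, rfl⟩
    exact hk2
  · obtain ⟨i₀, h1, h2, hmin⟩ := exists_min S s t x hlt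
    refine ⟨S.Y i₀ t, ?_⟩
    rintro y ⟨k, hk1, hk2, rfl⟩
    exact hmin k hk1 hk2

lemma psi_le_mem (S : Skeleton) {s t x : ℝ} (hst : s ≤ t) {j : ℕ}
    (hj : (S.p j : ℝ) ≤ s) (hxj : x ≤ S.Y j s) : S.psi s x t ≤ S.Y j t := by
  rw [psi_eq]
  exact csInf_le (cset_bddBelow S hst x) ⟨j, hj, hxj, rfl⟩

lemma psi_ge_below (S : Skeleton) {s τ x : ℝ} {k : ℕ} (hsτ : s ≤ τ)
    (hk : (S.p k : ℝ) ≤ s) (hks : S.Y k s ≤ x) : S.Y k τ ≤ S.psi s x τ := by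
  rw [psi_eq]
  apply le_csInf (cset_nonempty S s x τ)
  rintro y ⟨m, hm1, hm2, rfl⟩
  exact noncross S hk hm1 hsτ (hks.trans hm2)

lemma psi_self (S : Skeleton) (s x : ℝ) : S.psi s x s = x := by
  rw [psi_eq]
  apply le_antisymm
  · apply le_of_forall_pos_le_add
    intro ε hε
    obtain ⟨i, hip, hmem⟩ := exists_mid S s x (x + ε) (by linarith)
    calc sInf (cset S s x s) ≤ S.Y i s :=
          csInf_le (cset_bddBelow S le_rfl x) ⟨i, hip.le, hmem.1.le, rfl⟩
      _ ≤ x + ε := hmem.2.le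
  · apply le_csInf (cset_nonempty S s x s)
    rintro y ⟨k, _, hk2, rfl⟩
    exact hk2

lemma psi_mono (S : Skeleton) {s t : ℝ} (hst : s ≤ t) {x y : ℝ} (hxy : x ≤ y) :
    S.psi s x t ≤ S.psi s y t := by
  rw [psi_eq, psi_eq]
  apply csInf_le_csInf (cset_bddBelow S hst x) (cset_nonempty S s y t)
  rintro z ⟨k, h1, h2, h3⟩
  exact ⟨k, h1, hxy.trans h2, h3⟩


/-- minimizer persists to later times -/
lemma min_persist (S : Skeleton) {s t x : ℝ} {i₀ : ℕ} (hst : s ≤ t)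
    (h1 : (S.p i₀ : ℝ) ≤ s) (h2 : x ≤ S.Y i₀ s)
    (hmin : ∀ k, (S.p k : ℝ) ≤ s → x ≤ S.Y k s → S.Y i₀ t ≤ S.Y k t)
    {τ : ℝ} (htτ : t ≤ τ) : S.psi s x τ = S.Y i₀ τ := by
  apply psi_eq_of_min S h1 h2
  intro k hk hxk
  exact noncross S (h1.trans hst) (hk.trans hst) htτ (hmin k hk hxk)

end SkelAux

open SkelAux

/-- the flow `ψ` built from the skeleton belongs to the space of flows 𝔽;
in particular it satisfies F2 (density of the range), F3 (right-continuity at fresh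
points) and F4 (every trajectory starts from a fresh point). -/
theorem psi_isFlow (S : Skeleton) : IsFlow S.psi := by
  refine ⟨fun s x => psi_self S s x, ?_, ?_, ?_, ?_, ?_⟩
  -- continuity of trajectories
  · intro s x τ hτ
    rcases (Set.mem_Ici.mp hτ).eq_or_lt with heq | hlt
    · subst heq
      have h0 : S.psi s x s = x := psi_self S s x
      simp only [ContinuousWithinAt, h0]
      refine tendsto_order.2 ⟨?_, ?_⟩
      · intro a ha
        obtain ⟨k, hkp, hkmem⟩ := exists_mid S s a x ha
        have hev : ∀ᶠ u in nhds s, a < S.Y k u :=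
          (S.cont k).continuousAt.eventually (eventually_gt_nhds hkmem.1)
        filter_upwards [self_mem_nhdsWithin, nhdsWithin_le_nhds hev] with u hu1 hu2
        exact lt_of_lt_of_le hu2 (psi_ge_below S (Set.mem_Ici.mp hu1) hkp.le hkmem.2.le)
      · intro b hb
        obtain ⟨j, hjp, hjmem⟩ := exists_mid S s x b hb
        have hev : ∀ᶠ u in nhds s, S.Y j u < b :=
          (S.cont j).continuousAt.eventually (eventually_lt_nhds hjmem.2)
        filter_upwards [self_mem_nhdsWithin, nhdsWithin_le_nhds hev] with u hu1 hu2
        exact lt_of_le_of_lt (psi_le_mem S (Set.mem_Ici.mp hu1) hjp.le hjmem.1.le) hu2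
    · have h1 : s < (s + τ) / 2 := by linarith
      have h2 : (s + τ) / 2 < τ := by linarith
      obtain ⟨i₀, hi1, hi2, hmin⟩ := exists_min S s ((s + τ) / 2) x h1
      have hpsieq : ∀ u, (s + τ) / 2 ≤ u → S.psi s x u = S.Y i₀ u :=
        fun u hu => min_persist S h1.le hi1 hi2 hmin hu
      have hca : ContinuousAt (fun u => S.psi s x u) τ := by
        apply (S.cont i₀).continuousAt.congr
        filter_upwards [Ioi_mem_nhds h2] with u hu
        exact (hpsieq u hu.le).symm
      exact hca.continuousWithinAt
  -- F1: flow property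
  · intro r s t x hrs hst
    rcases hrs.eq_or_lt with rfl | hrs'
    · rw [psi_self]
    · obtain ⟨i₀, hi1, hi2, hmin⟩ := exists_min S r s x hrs'
      have hs : S.psi r x s = S.Y i₀ s := psi_eq_of_min S hi1 hi2 hmin
      have ht : S.psi r x t = S.Y i₀ t := min_persist S hrs'.le hi1 hi2 hmin hst
      rw [hs, ht]
      exact psi_eq_of_min S (hi1.trans hrs'.le) le_rfl
        (fun k hk hxk => noncross S (hi1.trans hrs'.le) hk hst hxk)
  -- F2: density of range
  · intro s
    refine Dense.mono ?_ (S.sp3 s)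
    rintro y ⟨i, hip, hiy⟩
    exact ⟨(S.p i : ℝ), (S.u i : ℝ), hip, (psi_start S i hip.le).trans hiy⟩
  -- F3: right-continuity at fresh points
  · intro s t hst x hx
    rcases hst.eq_or_lt with rfl | hst'
    · have hfun : (fun y => S.psi s y s) = fun y => y := funext (psi_self S s)
      rw [hfun]
      exact continuousWithinAt_id
    · obtain ⟨i₀, hi1, hi2, hmin⟩ := exists_min S s t x hst'
      have hpsix : S.psi s x t = S.Y i₀ t := psi_eq_of_min S hi1 hi2 hmin
      rcases hi2.eq_or_lt with heq | hxlt
      · -- boundary case: x = Y i₀ s; here p i₀ = s and x = u i₀, use SP5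
        have hps : (S.p i₀ : ℝ) = s := by
          rcases hi1.eq_or_lt with h | h
          · exact h
          · exact absurd ⟨(S.p i₀ : ℝ), (S.u i₀ : ℝ), h,
              (psi_start S i₀ h.le).trans heq.symm⟩ hx
        have hux : x = (S.u i₀ : ℝ) := heq.trans (by
          rw [show s = ((S.p i₀ : ℝ)) from hps.symm]
          exact S.init i₀ _ le_rfl)
        unfold ContinuousWithinAt
        refine tendsto_order.2 ⟨?_, ?_⟩
        · intro a ha
          filter_upwards [self_mem_nhdsWithin] with y hy
          exact lt_of_lt_of_le ha (psi_mono S hst'.le (Set.mem_Ici.mp hy))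
        · intro b hb
          have hb' : S.Y i₀ t < b := hpsix ▸ hb
          obtain ⟨δ, hδ, hsp5⟩ := S.sp5 i₀ ((b - S.Y i₀ t) / 2) (by linarith)
          have key : ∀ y, x ≤ y → y < x + δ → S.psi s y t < b := by
            intro y hy1 hy2
            obtain ⟨q, hq1, hq2⟩ := exists_rat_btwn hy2
            obtain ⟨j, hj⟩ := S.enum.2 (S.p i₀, q)
            have hpj : S.p j = S.p i₀ := congrArg Prod.fst hj
            have huj : S.u j = q := congrArg Prod.snd hj
            have hpjs : (S.p j : ℝ) = s := by rw [hpj]; exact hps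
            have hYjs : S.Y j s = (q : ℝ) := by
              rw [← huj]
              exact S.init j s (le_of_eq hpjs.symm)
            have hcand : S.psi s y t ≤ S.Y j t :=
              psi_le_mem S hst'.le hpjs.le (by rw [hYjs]; exact hq1.le)
            have hsp : S.Y j t - S.Y i₀ t ≤ (b - S.Y i₀ t) / 2 := by
              apply hsp5 j hpj
              · rw [huj, ← hux]; exact lt_of_le_of_lt hy1 hq1
              · rw [huj, ← hux]; exact hq2
              · rw [hps]; exact hst'.le
            linarith
          filter_upwards [Filter.inter_mem self_mem_nhdsWithin
            (nhdsWithin_le_nhds (Iio_mem_nhds (lt_add_of_pos_right x hδ)))] with y hy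
          exact key y (Set.mem_Ici.mp hy.1) hy.2
      · -- interior case: psi is locally constant
        have hconst : ∀ y ∈ Set.Ici x ∩ Set.Iio (S.Y i₀ s), S.psi s y t = S.Y i₀ t :=
          fun y hy => psi_eq_of_min S hi1 (le_of_lt hy.2)
            (fun k hk hyk => hmin k hk (le_trans hy.1 hyk))
        apply ContinuousWithinAt.congr_of_eventuallyEq
          (continuousWithinAt_const : ContinuousWithinAt (fun _ => S.Y i₀ t) (Set.Ici x) x)
        · filter_upwards [Filter.inter_mem self_mem_nhdsWithin
            (nhdsWithin_le_nhds (Iio_mem_nhds hxlt))] with y hy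
          exact hconst y hy
        · exact hpsix
  -- F4: fresh starting points
  · intro s t x hst
    obtain ⟨i₀, hi1, hi2, hmin⟩ := exists_min S s t x hst
    refine ⟨(S.p i₀ : ℝ), (S.u i₀ : ℝ), lt_of_le_of_lt hi1 hst, ?_, ?_⟩
    · rintro ⟨r', x', hr', heq⟩
      obtain ⟨k, hk1, hk2, hkmin⟩ := exists_min S r' (S.p i₀) x' hr'
      have hval : S.psi r' x' (S.p i₀) = S.Y k (S.p i₀) := psi_eq_of_min S hk1 hk2 hkmin
      exact S.sp1 k i₀ (lt_of_le_of_lt hk1 hr') (by rw [← hval]; exact heq)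
    · rw [psi_eq_of_min S hi1 hi2 hmin, psi_start S i₀ (hi1.trans hst.le)]
end

section
/- Let Ω = [0,1]² with the Borel σ-field and two-dimensional Lebesgue measure P. Define ψ_{0,1}(ω₁,ω₂;x) = ω₁ for all x ∈ [0,1], and ψ_{1,2}(ω₁,ω₂;x) = ω₂ if x ≠ ω₁ and ψ_{1,2}(ω₁,ω₂;x) = ω₁ if x = ω₁. Then the σ-fields σ(ψ_{0,1}(·;x) : x ∈ [0,1]) and σ(ψ_{1,2}(·;x) : x ∈ [0,1]) are independent under P. -/
open MeasureTheory

/-- The unit interval `[0,1]`. -/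
abbrev unitI : Set ℝ := Set.Icc (0 : ℝ) 1

/-- Ω = [0,1]², with Borel σ-field and two-dimensional Lebesgue measure `volume`
(a probability measure). -/
abbrev SampleSpace : Type := unitI × unitI

/-- `ψ_{0,1}(ω₁,ω₂;x) = ω₁`. -/
def psi01 (ω : SampleSpace) (_x : unitI) : ℝ := (ω.1 : ℝ)

/-- `ψ_{1,2}(ω₁,ω₂;x) = ω₂` if `x ≠ ω₁`, `= ω₁` if `x = ω₁`. -/
noncomputable def psi12 (ω : SampleSpace) (x : unitI) : ℝ :=
  if (x : ℝ) = (ω.1 : ℝ) then (ω.1 : ℝ) else (ω.2 : ℝ)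

/-- σ-field generated by the family `ω ↦ ψ_{0,1}(ω;x)`, `x ∈ [0,1]`. -/
def sigma01 : MeasurableSpace SampleSpace :=
  ⨆ x : unitI, MeasurableSpace.comap (fun ω => psi01 ω x) inferInstance

/-- σ-field generated by the family `ω ↦ ψ_{1,2}(ω;x)`, `x ∈ [0,1]`. -/
noncomputable def sigma12 : MeasurableSpace SampleSpace :=
  ⨆ x : unitI, MeasurableSpace.comap (fun ω => psi12 ω x) inferInstance

lemma volume_singleton_unitI (x : unitI) : (volume : Measure unitI) {x} = 0 := by
  rw [Measure.Subtype.volume_def,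
    Measure.comap_apply _ Subtype.coe_injective
      (fun s hs => MeasurableSet.subtype_image measurableSet_Icc hs)
      _ (measurableSet_singleton x)]
  simp

lemma volume_fst_eq (x : unitI) :
    volume {ω : SampleSpace | ω.1 = x} = 0 := by
  have : {ω : SampleSpace | ω.1 = x} = ({x} : Set unitI) ×ˢ (Set.univ : Set unitI) := by
    ext ω
    simp only [Set.mem_setOf_eq, Set.mem_prod, Set.mem_singleton_iff, Set.mem_univ, and_true]
  rw [this, Measure.volume_eq_prod, Measure.prod_prod, volume_singleton_unitI]
  simp

lemma sigma12_ae (B : Set SampleSpace) (hB : MeasurableSet[sigma12] B) :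
    ∃ B' : Set unitI, MeasurableSet B' ∧ B =ᵐ[volume] (Prod.snd ⁻¹' B') := by
  rw [sigma12, MeasurableSpace.measurableSet_iSup] at hB
  induction hB with
  | basic s hs =>
      obtain ⟨x, S, hS, rfl⟩ := hs
      refine ⟨Subtype.val ⁻¹' S, measurable_subtype_coe hS, ?_⟩
      have hsub : {ω : SampleSpace |
          ¬(ω ∈ (fun ω => psi12 ω x) ⁻¹' S ↔ ω ∈ Prod.snd ⁻¹' (Subtype.val ⁻¹' S))} ⊆
          {ω : SampleSpace | ω.1 = x} := by
        intro ω hω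
        by_contra h
        apply hω
        have hne : (x : ℝ) ≠ (ω.1 : ℝ) := by
          intro he; exact h (Subtype.ext he.symm)
        simp [psi12, hne]
      rw [Filter.eventuallyEq_set]
      exact measure_mono_null hsub (volume_fst_eq x)
  | empty => exact ⟨∅, MeasurableSet.empty, by simp⟩
  | compl s _ ih =>
      obtain ⟨B', hB', hae⟩ := ih
      exact ⟨B'ᶜ, hB'.compl, by simpa [Set.preimage_compl] using hae.compl⟩
  | iUnion f _ ih =>
      choose g hg hgae using ih
      refine ⟨⋃ i, g i, MeasurableSet.iUnion hg, ?_⟩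
      rw [Set.preimage_iUnion]
      exact EventuallyEq.countable_iUnion hgae

/-- the σ-fields `σ(ψ_{0,1}(⋅;x) : x ∈ [0,1])` and
`σ(ψ_{1,2}(⋅;x) : x ∈ [0,1])` are independent under the Lebesgue measure on [0,1]². -/
theorem sigma01_indep_sigma12 :
    ∀ A B : Set SampleSpace, MeasurableSet[sigma01] A → MeasurableSet[sigma12] B →
      volume (A ∩ B) = volume A * volume B := by
  intro A B hA hB
  -- A is a cylinder set in the first coordinate
  have h01 : sigma01 = MeasurableSpace.comap (fun ω : SampleSpace => (ω.1 : ℝ))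
      inferInstance := by
    have : ∀ x : unitI, MeasurableSpace.comap (fun ω : SampleSpace => psi01 ω x)
        inferInstance = MeasurableSpace.comap (fun ω : SampleSpace => (ω.1 : ℝ))
        inferInstance := fun x => rfl
    rw [sigma01]
    simp only [this]
    exact iSup_const
  rw [h01] at hA
  obtain ⟨S, hS, rfl⟩ := hA
  obtain ⟨B', hB', hae⟩ := sigma12_ae B hB
  set T : Set unitI := Subtype.val ⁻¹' S with hT
  have hTm : MeasurableSet T := measurable_subtype_coe hS
  have hAeq : (fun ω : SampleSpace => (ω.1 : ℝ)) ⁻¹' S = Prod.fst ⁻¹' T := rfl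
  have key : ∀ V U : Set unitI, volume (Prod.fst ⁻¹' V ∩ Prod.snd ⁻¹' U) =
      volume V * volume U := by
    intro V U
    have : Prod.fst ⁻¹' V ∩ Prod.snd ⁻¹' U = V ×ˢ U := (Set.prod_eq V U).symm
    rw [this, Measure.volume_eq_prod, Measure.prod_prod]
  have h1 : volume ((fun ω : SampleSpace => (ω.1 : ℝ)) ⁻¹' S ∩ B) =
      volume T * volume B' := by
    rw [hAeq, measure_congr ((Filter.EventuallyEq.refl _ _).inter hae), key]
  have h2 : volume ((fun ω : SampleSpace => (ω.1 : ℝ)) ⁻¹' S) = volume T := by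
    rw [hAeq]
    have : Prod.fst ⁻¹' T = Prod.fst ⁻¹' T ∩ Prod.snd ⁻¹' (Set.univ : Set unitI) := by simp
    rw [this, key]; simp
  have h3 : volume B = volume B' := by
    rw [measure_congr hae]
    have : Prod.snd ⁻¹' B' = Prod.fst ⁻¹' (Set.univ : Set unitI) ∩ Prod.snd ⁻¹' B' := by simp
    rw [this, key]; simp
  rw [h1, h2, h3]
end

section
/- Let (P^{(n)}_t)_{t≥0}, n ≥ 1, be families of Markov kernels on ℝⁿ. Suppose ψ = (ψ_{s,t})_{s≤t} on a probability space (Ω,F,P) and ψ̃ = (ψ̃_{s,t})_{s≤t} on a probability space (Ω̃,F̃,P̃) are two stochastic flows of mappings generated by the same kernels, i.e. each family consists of jointly measurable maps Ω × ℝ → ℝ satisfying: (SF2) for all r ≤ s ≤ t and x ∈ ℝ, P(ψ_{s,t}(ψ_{r,s}(x)) = ψ_{r,t}(x)) = 1; and (SF3) with F^ψ_s = σ(ψ_{p,q}(x) : p ≤ q ≤ s, x ∈ ℝ), for every s ≤ t, every n ≥ 1, every F^ψ_s-measurable ℝⁿ-valued random vector ξ and Borel B ⊆ ℝⁿ, P(ψ_{s,t}(ξ)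 ∈ B | F^ψ_s) = P^{(n)}_{t−s}(ξ,B) a.s. (and likewise for ψ̃). Then ψ and ψ̃ have the same finite-dimensional distributions: for all n, l ≥ 1, all times t₁ ≤ t₂ ≤ … ≤ tₙ and all points x₁,…,x_l ∈ ℝ, the joint law under P of the family (ψ_{t_i,t_j}(x_k))_{1≤i<j≤n, 1≤k≤l} equals the joint law under P̃ of (ψ̃_{t_i,t_j}(x_k))_{1≤i<j≤n, 1≤k≤l}. -/
/-!
The increments `ψ_{t_i,t_j}(x_k)` with `i < j ≤ a` are `F^ψ_{t_a}`-measurable, and by the weak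
flow property the next column `j = a + 1` is, almost surely, `ψ_{t_a,t_{a+1}}` applied to the
past-measurable starting points `ψ_{t_i,t_a}(x_k)` (`i < a`) and `x_k` (`i = a`). By SF3 the joint
law of the columns up to `a` and this new column is the composition of the law of the columns up
to `a` with the kernel `P^{(nl)}_{t_{a+1} - t_a}`. Hence the law of the columns up to `a + 1` is
determined by the law of those up to `a` and the kernels alone, and induction on `a` concludes.
-/

open MeasureTheory ProbabilityTheory

/-- The "past" σ-field `F^ψ_s = σ(ψ_{p,q}(x) : p ≤ q ≤ s, x ∈ ℝ)`. -/
def pastSigma {Ω : Type*} (ψ : ℝ → ℝ → Ω → ℝ → ℝ) (s : ℝ) : MeasurableSpace Ω :=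
  ⨆ (p : ℝ) (q : ℝ) (_ : p ≤ q) (_ : q ≤ s) (x : ℝ),
    MeasurableSpace.comap (fun ω => ψ p q ω x) inferInstance

/-- A stochastic flow of mappings generated by the kernels `K`: jointly measurable
maps `ψ_{s,t}` (for `s ≤ t`) satisfying the weak flow property SF2 and the
conditional-increment property SF3. -/
structure IsStochasticFlow {Ω : Type*} [MeasurableSpace Ω] (μ : Measure Ω)
    (K : (n : ℕ) → ℝ → Kernel (Fin n → ℝ) (Fin n → ℝ))
    (ψ : ℝ → ℝ → Ω → ℝ → ℝ) : Prop where
  -- SF1: joint measurability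
  meas : ∀ s t : ℝ, s ≤ t → Measurable (fun q : Ω × ℝ => ψ s t q.1 q.2)
  -- SF2: weak flow property
  sf2 : ∀ r s t : ℝ, r ≤ s → s ≤ t → ∀ x : ℝ,
    μ {ω | ψ s t ω (ψ r s ω x) = ψ r t ω x} = 1
  -- SF3: conditional distribution of increments
  sf3 : ∀ s t : ℝ, s ≤ t → ∀ n : ℕ, 0 < n → ∀ ξ : Ω → Fin n → ℝ,
    Measurable[pastSigma ψ s] ξ →
    ∀ B : Set (Fin n → ℝ), MeasurableSet B →
    (μ[Set.indicator {ω' | (fun i => ψ s t ω' (ξ ω' i)) ∈ B} (fun _ => (1 : ℝ))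
        | pastSigma ψ s])
      =ᵐ[μ] fun ω => (K n (t - s) (ξ ω) B).toReal

lemma measurable_pastSigma_apply {Ω : Type*} {ψ : ℝ → ℝ → Ω → ℝ → ℝ} {p q s : ℝ} (hpq : p ≤ q)
    (hqs : q ≤ s) (x : ℝ) : Measurable[pastSigma ψ s] fun ω => ψ p q ω x :=
  measurable_iff_comap_le.mpr <| le_iSup_of_le p <| le_iSup_of_le q <| le_iSup_of_le hpq <|
    le_iSup_of_le hqs <| le_iSup_of_le x le_rfl

namespace IsStochasticFlow

variable {Ω : Type*} [MeasurableSpace Ω] {μ : Measure Ω}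
  {K : (n : ℕ) → ℝ → Kernel (Fin n → ℝ) (Fin n → ℝ)} {ψ : ℝ → ℝ → Ω → ℝ → ℝ} {s t : ℝ}

lemma measurable_comp (hψ : IsStochasticFlow μ K ψ) (hst : s ≤ t) {ξ : Ω → ℝ}
    (hξ : Measurable ξ) : Measurable fun ω => ψ s t ω (ξ ω) :=
  (hψ.meas s t hst).comp (measurable_id.prodMk hξ)

lemma measurable_apply (hψ : IsStochasticFlow μ K ψ) (hst : s ≤ t) (x : ℝ) :
    Measurable fun ω => ψ s t ω x :=
  hψ.measurable_comp hst measurable_const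

lemma measurable_comp_pi (hψ : IsStochasticFlow μ K ψ) (hst : s ≤ t) {N : ℕ}
    {ξ : Ω → Fin N → ℝ} (hξ : Measurable ξ) : Measurable fun ω i => ψ s t ω (ξ ω i) :=
  measurable_pi_lambda _ fun _ => hψ.measurable_comp hst hξ.eval

lemma pastSigma_le (hψ : IsStochasticFlow μ K ψ) (s : ℝ) : pastSigma ψ s ≤ ‹MeasurableSpace Ω› :=
  iSup_le fun _ => iSup_le fun _ => iSup_le fun hpq => iSup_le fun _ => iSup_le fun x =>
    measurable_iff_comap_le.mp (hψ.measurable_apply hpq x)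

lemma ae_comp_eq [IsProbabilityMeasure μ] (hψ : IsStochasticFlow μ K ψ) {r : ℝ} (hrs : r ≤ s)
    (hst : s ≤ t) (x : ℝ) : ∀ᵐ ω ∂μ, ψ s t ω (ψ r s ω x) = ψ r t ω x := by
  have hmeas := measurableSet_eq_fun (hψ.measurable_comp hst (hψ.measurable_apply hrs x))
    (hψ.measurable_apply (hrs.trans hst) x)
  rw [ae_iff_measure_eq hmeas.nullMeasurableSet, hψ.sf2 r s t hrs hst x, measure_univ]

lemma measure_inter_flow_preimage_eq_setLIntegral [IsFiniteMeasure μ] (hψ : IsStochasticFlow μ K ψ)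
    (hst : s ≤ t) {N : ℕ} [IsMarkovKernel (K N (t - s))] {ξ : Ω → Fin N → ℝ}
    (hξ : Measurable[pastSigma ψ s] ξ) {B : Set (Fin N → ℝ)} (hB : MeasurableSet B)
    {S : Set Ω} (hS : MeasurableSet[pastSigma ψ s] S) :
    μ (S ∩ {ω | (fun i => ψ s t ω (ξ ω i)) ∈ B}) = ∫⁻ ω in S, K N (t - s) (ξ ω) B ∂μ := by
  have hξm : Measurable ξ := hξ.mono (hψ.pastSigma_le s) le_rfl
  rcases N.eq_zero_or_pos with rfl | hN
  -- SF3 is only assumed for `n > 0`; `Fin 0 → ℝ` is a single point.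
  · induction B using Subsingleton.set_cases <;> simp
  have hA : MeasurableSet {ω | (fun i => ψ s t ω (ξ ω i)) ∈ B} :=
    hψ.measurable_comp_pi hst hξm hB
  have hfin : ∫⁻ ω in S, K N (t - s) (ξ ω) B ∂μ ≠ ⊤ :=
    ((lintegral_mono fun _ => prob_le_one).trans_lt
      (by simp [measure_lt_top μ S])).ne
  calc μ (S ∩ {ω | (fun i => ψ s t ω (ξ ω i)) ∈ B})
      = ENNReal.ofReal (∫ ω in S, {ω | (fun i => ψ s t ω (ξ ω i)) ∈ B}.indicator 1 ω ∂μ) := by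
        rw [integral_indicator_one hA, measureReal_restrict_apply hA, Set.inter_comm,
          ofReal_measureReal]
    _ = ENNReal.ofReal (∫ ω in S, (K N (t - s) (ξ ω) B).toReal ∂μ) := by
        congr 1
        exact (setIntegral_condExp (hψ.pastSigma_le s)
          ((integrable_const 1).indicator hA) hS).symm.trans
          (setIntegral_congr_ae (hψ.pastSigma_le s S hS)
            ((hψ.sf3 s t hst N hN ξ hξ B hB).mono fun _ h _ => h))
    _ = ∫⁻ ω in S, K N (t - s) (ξ ω) B ∂μ := by
        rw [integral_toReal (f := fun ω => K N (t - s) (ξ ω) B)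
          ((Kernel.measurable_coe _ hB).comp hξm).aemeasurable
          (ae_of_all _ fun _ => measure_lt_top _ _), ENNReal.ofReal_toReal hfin]

lemma map_prodMk_flow_eq_compProd [IsFiniteMeasure μ] (hψ : IsStochasticFlow μ K ψ)
    (hst : s ≤ t) {N : ℕ} [IsMarkovKernel (K N (t - s))] {E : Type*} [MeasurableSpace E]
    {X : Ω → E} (hX : Measurable[pastSigma ψ s] X) {Ξ : E → Fin N → ℝ} (hΞ : Measurable Ξ) :
    μ.map (fun ω => (X ω, fun i => ψ s t ω (Ξ (X ω) i)))
      = μ.map X ⊗ₘ (K N (t - s)).comap Ξ hΞ := by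
  have hXm : Measurable X := hX.mono (hψ.pastSigma_le s) le_rfl
  have hY : Measurable fun ω i => ψ s t ω (Ξ (X ω) i) :=
    hψ.measurable_comp_pi hst (hΞ.comp hXm)
  refine Measure.ext_prod fun {C B} hC hB => ?_
  rw [Measure.map_apply (hXm.prodMk hY) (hC.prod hB),
    Set.mk_preimage_prod, Measure.compProd_apply_prod hC hB,
    setLIntegral_map hC (Kernel.measurable_coe _ hB) hXm]
  exact hψ.measure_inter_flow_preimage_eq_setLIntegral hst (hΞ.comp hX) hB (hX hC)

end IsStochasticFlow

section Increments

variable {Ω : Type*} {n l : ℕ}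

def truncatedIncrements (ψ : ℝ → ℝ → Ω → ℝ → ℝ) (t : Fin n → ℝ) (x : Fin l → ℝ) (m : ℕ)
    (ω : Ω) : Fin n → Fin n → Fin l → ℝ :=
  fun i j k => if i < j ∧ (j : ℕ) ≤ m then ψ (t i) (t j) ω (x k) else 0

/-- Indexed by `(i, k) ≃ Fin (n * l)`: the position at time `t a` of the trajectory started from
`x k` at time `t i`, read off the increments `F` (for `i ≥ a`, just `x k`). -/
def startPositions (x : Fin l → ℝ) (a : Fin n) (F : Fin n → Fin n → Fin l → ℝ) :
    Fin (n * l) → ℝ :=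
  fun p => if (finProdFinEquiv.symm p).1 < a then
    F (finProdFinEquiv.symm p).1 a (finProdFinEquiv.symm p).2 else x (finProdFinEquiv.symm p).2

def appendColumn (b : Fin n) (F : Fin n → Fin n → Fin l → ℝ) (y : Fin (n * l) → ℝ) :
    Fin n → Fin n → Fin l → ℝ :=
  fun i j k => if j = b ∧ i < j then y (finProdFinEquiv (i, k)) else F i j k

lemma measurable_startPositions (x : Fin l → ℝ) (a : Fin n) :
    Measurable (startPositions x a) := by
  refine measurable_pi_lambda _ fun p => ?_
  unfold startPositions
  split_ifs <;> fun_prop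

lemma measurable_appendColumn (b : Fin n) :
    Measurable fun p : (Fin n → Fin n → Fin l → ℝ) × (Fin (n * l) → ℝ) =>
      appendColumn b p.1 p.2 := by
  refine measurable_pi_lambda _ fun i => measurable_pi_lambda _ fun j =>
    measurable_pi_lambda _ fun k => ?_
  unfold appendColumn
  split_ifs <;> fun_prop

variable {ψ : ℝ → ℝ → Ω → ℝ → ℝ} {t : Fin n → ℝ} {x : Fin l → ℝ} {m : ℕ}

lemma truncatedIncrements_of_lt {i j : Fin n} (hij : i < j) (hj : (j : ℕ) ≤ m) (ω : Ω)
    (k : Fin l) : truncatedIncrements ψ t x m ω i j k = ψ (t i) (t j) ω (x k) :=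
  if_pos ⟨hij, hj⟩

lemma truncatedIncrements_zero : truncatedIncrements ψ t x 0 = fun _ _ _ _ => 0 := by
  funext ω i j k
  exact if_neg fun ⟨hij, hj⟩ => by omega

lemma truncatedIncrements_succ_of_le (h : n ≤ m + 1) :
    truncatedIncrements ψ t x (m + 1) = truncatedIncrements ψ t x m := by
  funext ω i j k
  exact if_congr (by omega) rfl rfl

lemma measurable_truncatedIncrements {mΩ : MeasurableSpace Ω}
    (h : ∀ i j : Fin n, i < j → (j : ℕ) ≤ m → ∀ k, Measurable fun ω => ψ (t i) (t j) ω (x k)) :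
    Measurable (truncatedIncrements ψ t x m) := by
  refine measurable_pi_lambda _ fun i => measurable_pi_lambda _ fun j =>
    measurable_pi_lambda _ fun k => ?_
  unfold truncatedIncrements
  split_ifs with hc
  exacts [h i j hc.1 hc.2 k, measurable_const]

end Increments

namespace IsStochasticFlow

variable {Ω : Type*} [MeasurableSpace Ω] {μ : Measure Ω}
  {K : (n : ℕ) → ℝ → Kernel (Fin n → ℝ) (Fin n → ℝ)} {ψ : ℝ → ℝ → Ω → ℝ → ℝ}
  {n l : ℕ} {t : Fin n → ℝ}

lemma ae_truncatedIncrements_succ [IsProbabilityMeasure μ] (hψ : IsStochasticFlow μ K ψ)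
    (ht : Monotone t) (x : Fin l → ℝ) {a b : Fin n} (hab : (b : ℕ) = a + 1) :
    ∀ᵐ ω ∂μ, truncatedIncrements ψ t x b ω =
      appendColumn b (truncatedIncrements ψ t x a ω) fun p =>
        ψ (t a) (t b) ω (startPositions x a (truncatedIncrements ψ t x a ω) p) := by
  have hflow : ∀ᵐ ω ∂μ, ∀ i : Fin n, i < a → ∀ k,
      ψ (t a) (t b) ω (ψ (t i) (t a) ω (x k)) = ψ (t i) (t b) ω (x k) := by
    simp only [ae_all_iff, Filter.eventually_imp_distrib_left]
    exact fun i hi k => hψ.ae_comp_eq (ht hi.le) (ht (by omega)) (x k)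
  filter_upwards [hflow] with ω hω
  funext i j k
  simp only [appendColumn, startPositions, Equiv.symm_apply_apply]
  by_cases hj : j = b ∧ i < j
  · obtain ⟨rfl, hij⟩ := hj
    rw [if_pos ⟨rfl, hij⟩, truncatedIncrements_of_lt hij le_rfl]
    rcases lt_or_eq_of_le (show i ≤ a by omega) with hia | rfl
    · rw [if_pos hia, truncatedIncrements_of_lt hia le_rfl, hω i hia k]
    · rw [if_neg (lt_irrefl _)]
  · rw [if_neg hj]
    exact if_congr (by omega) rfl rfl

lemma map_truncatedIncrements_succ [IsProbabilityMeasure μ] (hψ : IsStochasticFlow μ K ψ)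
    (ht : Monotone t) (x : Fin l → ℝ) {a b : Fin n} (hab : (b : ℕ) = a + 1)
    [IsMarkovKernel (K (n * l) (t b - t a))] :
    μ.map (truncatedIncrements ψ t x b) =
      (μ.map (truncatedIncrements ψ t x a) ⊗ₘ
        (K (n * l) (t b - t a)).comap (startPositions x a) (measurable_startPositions x a)).map
          fun p => appendColumn b p.1 p.2 := by
  have hpast : Measurable[pastSigma ψ (t a)] (truncatedIncrements ψ t x a) :=
    measurable_truncatedIncrements fun i j hij hja k =>
      measurable_pastSigma_apply (ht hij.le) (ht hja) (x k)
  have hmeas := hpast.mono (hψ.pastSigma_le _) le_rfl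
  have hpair : Measurable fun ω => (truncatedIncrements ψ t x a ω, fun p =>
      ψ (t a) (t b) ω (startPositions x a (truncatedIncrements ψ t x a ω) p)) :=
    hmeas.prodMk <|
      hψ.measurable_comp_pi (ht (by omega)) ((measurable_startPositions x a).comp hmeas)
  rw [Measure.map_congr (hψ.ae_truncatedIncrements_succ ht x hab),
    ← hψ.map_prodMk_flow_eq_compProd (ht (by omega)) hpast (measurable_startPositions x a),
    Measure.map_map (measurable_appendColumn b) hpair]
  rfl

lemma map_eq_map_truncatedIncrements (hψ : IsStochasticFlow μ K ψ) (ht : Monotone t)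
    (x : Fin l → ℝ) :
    μ.map (fun ω (q : {ij : Fin n × Fin n // ij.1 < ij.2} × Fin l) =>
        ψ (t q.1.1.1) (t q.1.1.2) ω (x q.2)) =
      (μ.map (truncatedIncrements ψ t x n)).map fun F q => F q.1.1.1 q.1.1.2 q.2 := by
  rw [Measure.map_map (by fun_prop) (measurable_truncatedIncrements fun i j hij _ k =>
    hψ.measurable_apply (ht hij.le) (x k))]
  congr 1
  funext ω q
  exact (truncatedIncrements_of_lt q.1.2 q.1.1.2.is_lt.le ω q.2).symm

lemma map_truncatedIncrements_eq [IsProbabilityMeasure μ] [∀ n t, IsMarkovKernel (K n t)]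
    {Ω' : Type*} [MeasurableSpace Ω'] {μ' : Measure Ω'} [IsProbabilityMeasure μ']
    {ψ' : ℝ → ℝ → Ω' → ℝ → ℝ} (hψ : IsStochasticFlow μ K ψ) (hψ' : IsStochasticFlow μ' K ψ')
    (ht : Monotone t) (x : Fin l → ℝ) (m : ℕ) :
    μ.map (truncatedIncrements ψ t x m) = μ'.map (truncatedIncrements ψ' t x m) := by
  induction m with
  | zero => simp only [truncatedIncrements_zero, Measure.map_const, measure_univ]
  | succ m ih =>
    by_cases hm : m + 1 < n
    · rw [hψ.map_truncatedIncrements_succ ht x (a := ⟨m, by omega⟩) (b := ⟨m + 1, hm⟩) rfl,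
        hψ'.map_truncatedIncrements_succ ht x (a := ⟨m, by omega⟩) (b := ⟨m + 1, hm⟩) rfl,
        ih]
    · rw [truncatedIncrements_succ_of_le (by omega), truncatedIncrements_succ_of_le (by omega), ih]

end IsStochasticFlow

/-- two stochastic flows of mappings generated by the same transition
kernels have the same finite-dimensional distributions: for all times
`t₁ ≤ … ≤ tₙ` and points `x₁,…,x_l`, the joint law of the family
`(ψ_{t_i,t_j}(x_k))_{i<j,k}` is the same for both flows. -/
theorem stochastic_flow_fdd_unique
    {Ω : Type*} [MeasurableSpace Ω] (μ : Measure Ω) [IsProbabilityMeasure μ]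
    {Ω' : Type*} [MeasurableSpace Ω'] (μ' : Measure Ω') [IsProbabilityMeasure μ']
    (K : (n : ℕ) → ℝ → Kernel (Fin n → ℝ) (Fin n → ℝ))
    [∀ n t, IsMarkovKernel (K n t)]
    (ψ : ℝ → ℝ → Ω → ℝ → ℝ) (ψ' : ℝ → ℝ → Ω' → ℝ → ℝ)
    (hψ : IsStochasticFlow μ K ψ) (hψ' : IsStochasticFlow μ' K ψ') :
    ∀ (n l : ℕ) (t : Fin n → ℝ), Monotone t → ∀ x : Fin l → ℝ,
      Measure.map (fun ω (q : {ij : Fin n × Fin n // ij.1 < ij.2} × Fin l) =>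
        ψ (t q.1.1.1) (t q.1.1.2) ω (x q.2)) μ
      = Measure.map (fun ω (q : {ij : Fin n × Fin n // ij.1 < ij.2} × Fin l) =>
        ψ' (t q.1.1.1) (t q.1.1.2) ω (x q.2)) μ' := by
  intro n l t ht x
  rw [hψ.map_eq_map_truncatedIncrements ht x, hψ'.map_eq_map_truncatedIncrements ht x,
    hψ.map_truncatedIncrements_eq hψ' ht x n]
end
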